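/- For all x, y > 0, x·log x − y·log y + (y − x)(1 + log y) ≥ (1/2)·min{1/x, 1/y}·(x − y)². -/

import Mathlib

/-!
Write `P(x|y) = x log (x / y) - x + y`. Two classical rational bounds on the logarithm settle
the two cases. If `x ≤ y`, then `log t ≥ sinh (log t) = (t - t⁻¹) / 2` at `t = x / y ≤ 1`
gives `P(x|y) ≥ (x - y)² / (2y)`. If `y ≤ x`, the Padé bound `log w ≥ 2 (w - 1) / (w + 1)`
at `w = x / y ≥ 1` gives `P(x|y) ≥ (x - y)² / (x + y) ≥ (x - y)² / (2x)`.
-/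

namespace Real

lemma sub_inv_div_two_le_log {t : ℝ} (ht : 0 < t) (ht1 : t ≤ 1) : (t - t⁻¹) / 2 ≤ log t := by
  rw [← sinh_log ht]
  exact sinh_le_self_iff.mpr (log_nonpos ht.le ht1)

lemma two_mul_sub_one_div_add_one_le_log {w : ℝ} (hw : 1 ≤ w) :
    2 * (w - 1) / (w + 1) ≤ log w := by
  convert le_log_one_add_of_nonneg (sub_nonneg.mpr hw) using 2 <;> ring

end Real

open Real

/-- `P(x|y)`, the Bregman divergence of `z ↦ z log z`. -/
noncomputable def relEntropy (x y : ℝ) : ℝ :=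
  x * log x - y * log y + (y - x) * (1 + log y)

lemma relEntropy_eq_mul_log_div {x y : ℝ} (hx : x ≠ 0) (hy : y ≠ 0) :
    relEntropy x y = x * log (x / y) - x + y := by
  rw [relEntropy, log_div hx hy]
  ring

lemma sq_sub_div_two_mul_le_relEntropy {x y : ℝ} (hx : 0 < x) (hxy : x ≤ y) :
    (x - y) ^ 2 / (2 * y) ≤ relEntropy x y := by
  have hy : 0 < y := hx.trans_le hxy
  have hlog := sub_inv_div_two_le_log (div_pos hx hy) ((div_le_one hy).mpr hxy)
  rw [relEntropy_eq_mul_log_div hx.ne' hy.ne']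
  calc (x - y) ^ 2 / (2 * y) = x * ((x / y - (x / y)⁻¹) / 2) - x + y := by
        field_simp
        ring
    _ ≤ x * log (x / y) - x + y := by gcongr

lemma sq_sub_div_add_le_relEntropy {x y : ℝ} (hy : 0 < y) (hyx : y ≤ x) :
    (x - y) ^ 2 / (x + y) ≤ relEntropy x y := by
  have hx : 0 < x := hy.trans_le hyx
  have hlog := two_mul_sub_one_div_add_one_le_log ((one_le_div hy).mpr hyx)
  rw [relEntropy_eq_mul_log_div hx.ne' hy.ne']
  calc (x - y) ^ 2 / (x + y) = x * (2 * (x / y - 1) / (x / y + 1)) - x + y := by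
        field_simp
        ring
    _ ≤ x * log (x / y) - x + y := by gcongr

theorem stmt_2 (x y : ℝ) (hx : 0 < x) (hy : 0 < y) :
    x * Real.log x - y * Real.log y + (y - x) * (1 + Real.log y) ≥
      (1 / 2) * min (1 / x) (1 / y) * (x - y) ^ 2 := by
  change relEntropy x y ≥ _
  rcases le_total x y with hxy | hyx
  · rw [min_eq_right (one_div_le_one_div_of_le hx hxy)]
    calc 1 / 2 * (1 / y) * (x - y) ^ 2 = (x - y) ^ 2 / (2 * y) := by ring
      _ ≤ relEntropy x y := sq_sub_div_two_mul_le_relEntropy hx hxy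
  · rw [min_eq_left (one_div_le_one_div_of_le hy hyx)]
    calc 1 / 2 * (1 / x) * (x - y) ^ 2 = (x - y) ^ 2 / (x + x) := by ring
      _ ≤ (x - y) ^ 2 / (x + y) := by gcongr
      _ ≤ relEntropy x y := sq_sub_div_add_le_relEntropy hy hyx
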